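/- Combining the previous bounds: for n ≥ 1 and ω_n = 2π F_n > 0, SNR_n < SNR_max · e^{-(2n - 2π e F_n R/c)}. Consequently, if SNR_n ≥ γ then F_n ≥ n c/(e π R) + (c/(2 e π R)) log(γ/SNR_max). -/

import Mathlib

/-!
`(e x)^n / n!` is one term of the series of `exp (e x)`, so `x^n / n! ≤ e^{e x - n}`; this
subsumes Stirling's `n! ≥ (n/e)^n` together with `t ≤ e^{t-1}`. Squaring and dividing by
`2n + 1 > 1` gives the strict chained bound at `x = π F_n R / c = z / 2`; taking logarithms and
solving for `F_n` gives the frequency bound.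
-/

open Real

lemma pow_div_factorial_le_exp_mul_exp_one_sub {x : ℝ} (hx : 0 ≤ x) (n : ℕ) :
    x ^ n / n.factorial ≤ exp (exp 1 * x - n) := by
  have hseries := pow_div_factorial_le_exp _ (mul_nonneg (exp_pos 1).le hx) n
  rw [mul_pow, exp_one_pow, mul_div_assoc] at hseries
  rw [exp_sub]
  exact (le_div_iff₀' (exp_pos n)).mpr hseries

lemma pow_two_mul_div_factorial_sq_lt_exp {x : ℝ} (hx : 0 ≤ x) {n : ℕ} (hn : 1 ≤ n) :
    x ^ (2 * n) / ((2 * n + 1) * (n.factorial : ℝ) ^ 2) < exp (2 * (exp 1 * x - n)) := by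
  have hprefactor : (1 : ℝ) < 2 * n + 1 := by
    have : (1 : ℝ) ≤ n := by exact_mod_cast hn
    linarith
  have hsq : x ^ (2 * n) / (n.factorial : ℝ) ^ 2 ≤ exp (2 * (exp 1 * x - n)) := by
    rw [pow_mul', ← div_pow, mul_comm, exp_mul, rpow_two]
    exact pow_le_pow_left₀ (by positivity) (pow_div_factorial_le_exp_mul_exp_one_sub hx n) 2
  calc x ^ (2 * n) / ((2 * n + 1) * (n.factorial : ℝ) ^ 2)
      = x ^ (2 * n) / (n.factorial : ℝ) ^ 2 / (2 * n + 1) := by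
        rw [div_div, mul_comm (2 * (n : ℝ) + 1)]
    _ ≤ exp (2 * (exp 1 * x - n)) / (2 * n + 1) := by gcongr
    _ < exp (2 * (exp 1 * x - n)) := div_lt_self (exp_pos _) hprefactor

lemma log_div_lt_of_lt_mul_exp {a b t : ℝ} (ha : 0 < a) (hb : 0 < b) (h : a < b * exp t) :
    log (a / b) < t :=
  (log_lt_iff_lt_exp (div_pos ha hb)).mpr ((div_lt_iff₀' hb).mpr h)

/-- Chained SNR bound and the resulting critical-frequency condition: if
`SNR_n ≤ SNR_max (2π F_n R/(2c))^{2n}/((2n+1)(n!)²)` with `n ≥ 1`, then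
`SNR_n < SNR_max e^{-(2n - 2π e F_n R/c)}`, and consequently `SNR_n ≥ γ` forces
`F_n ≥ n c/(eπR) + (c/(2eπR)) log(γ/SNR_max)`. -/
theorem snr_chain_and_critical_frequency (n : ℕ) (hn : 1 ≤ n)
    (R c Fn SNRmax snrn : ℝ) (hR : 0 < R) (hc : 0 < c) (hF : 0 < Fn) (hS : 0 < SNRmax)
    (hbound : snrn ≤ SNRmax * ((2 * Real.pi * Fn) * R / (2 * c)) ^ (2 * n) /
        ((2 * n + 1) * (n.factorial : ℝ) ^ 2)) :
    snrn < SNRmax * Real.exp (-(2 * n - 2 * Real.pi * Real.exp 1 * Fn * R / c)) ∧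
    ∀ γ : ℝ, 0 < γ → γ ≤ snrn →
      Fn ≥ n * c / (Real.exp 1 * Real.pi * R) +
        c / (2 * Real.exp 1 * Real.pi * R) * Real.log (γ / SNRmax) := by
  have hbase : (2 * π * Fn) * R / (2 * c) = π * Fn * R / c := by
    field_simp
  have hexponent :
      -(2 * n - 2 * π * exp 1 * Fn * R / c) = 2 * (exp 1 * (π * Fn * R / c) - n) := by
    ring
  have hchain : snrn < SNRmax * exp (-(2 * n - 2 * π * exp 1 * Fn * R / c)) := by
    rw [hbase, mul_div_assoc] at hbound
    rw [hexponent]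
    exact hbound.trans_lt <| mul_lt_mul_of_pos_left
      (pow_two_mul_div_factorial_sq_lt_exp (by positivity) hn) hS
  refine ⟨hchain, fun γ hγ hγle => ?_⟩
  have hlog := log_div_lt_of_lt_mul_exp hγ hS (hγle.trans_lt hchain)
  rw [hexponent] at hlog
  have hsolved : (2 * n + log (γ / SNRmax)) * c < 2 * exp 1 * π * R * Fn := by
    have := mul_lt_mul_of_pos_right hlog hc
    field_simp at this
    linarith
  calc (n : ℝ) * c / (exp 1 * π * R) + c / (2 * exp 1 * π * R) * log (γ / SNRmax)
      = (2 * n + log (γ / SNRmax)) * c / (2 * exp 1 * π * R) := by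
        field_simp
    _ ≤ Fn := by
        rw [div_le_iff₀ (by positivity)]
        linarith
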